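/- Let x₀, φ, t₀, ρ be as in the context, let α ∈ Sⁿ, and let r_α be any element of G preserving ℝ^{n+1}×{0} with r_α(α,1) = e₁. If there exists a sequence t_k → ∞ in [t₀,∞) such that ω(g_{t_k} r_α Λ₀) < ρ(t_k), then there exist infinitely many pairs (p,q) ∈ ℤ^{n+1} × ℕ with q ≥ x₀, p/q ∈ Sⁿ, and ‖α − p/q‖ < √(n+1)·φ(q). -/

import Mathlib

open MeasureTheory

/-- The unit Euclidean sphere `Sⁿ` in `ℝ^{n+1}` (the ambient space `Fin (n+1) → ℝ`
carries the supremum norm). -/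
noncomputable def unitSphere (n : ℕ) : Set (Fin (n + 1) → ℝ) :=
  {x | ∑ i, x i ^ 2 = 1}

/-- The rational point `p/q` in `ℝ^{n+1}`. -/
noncomputable def ratPt (n : ℕ) (p : Fin (n + 1) → ℤ) (q : ℕ) : Fin (n + 1) → ℝ :=
  fun i => (p i : ℝ) / (q : ℝ)

/-- The quadratic form `Q(x) = x₁² + ⋯ + x_{n+1}² − x_{n+2}²` on `ℝ^{n+2}`. -/
noncomputable def Qform (n : ℕ) (x : Fin (n + 2) → ℝ) : ℝ :=
  (∑ i : Fin (n + 1), x i.castSucc ^ 2) - x (Fin.last (n + 1)) ^ 2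

/-- `Λ₀ = ℤ^{n+2} ∩ L`, the integer points of the light cone `L = {Q = 0}`. -/
noncomputable def Lambda0 (n : ℕ) : Set (Fin (n + 2) → ℝ) :=
  {v | (∀ i, ∃ m : ℤ, v i = (m : ℝ)) ∧ Qform n v = 0}

/-- Membership in `G = SO(Q)`: determinant one and preservation of `Q`. -/
def isSOQ (n : ℕ) (g : Matrix (Fin (n + 2)) (Fin (n + 2)) ℝ) : Prop :=
  g.det = 1 ∧ ∀ x, Qform n (g.mulVec x) = Qform n x

/-- The one-parameter diagonal flow `g_t`. -/
noncomputable def gFlow (n : ℕ) (t : ℝ) : Matrix (Fin (n + 2)) (Fin (n + 2)) ℝ :=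
  Matrix.of fun i j =>
    if i = 0 ∧ j = 0 then Real.cosh t
    else if i = 0 ∧ j = Fin.last (n + 1) then -Real.sinh t
    else if i = Fin.last (n + 1) ∧ j = 0 then -Real.sinh t
    else if i = Fin.last (n + 1) ∧ j = Fin.last (n + 1) then Real.cosh t
    else if i = j then 1 else 0

/-- The vector `e₁ = (1,0,…,0,1) ∈ L`. -/
noncomputable def eOne (n : ℕ) : Fin (n + 2) → ℝ :=
  fun i => if i = 0 then 1 else if i = Fin.last (n + 1) then 1 else 0

/-- The embedding `α ↦ (α,1)` of `Sⁿ` into the light cone. -/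
noncomputable def embedS (n : ℕ) (α : Fin (n + 1) → ℝ) : Fin (n + 2) → ℝ :=
  Fin.snoc α 1

/-- The vector `(p,q) ∈ ℝ^{n+2}` with first `n+1` coordinates `p` and last coordinate `q`. -/
noncomputable def vecPQ (n : ℕ) (p : Fin (n + 1) → ℤ) (q : ℕ) : Fin (n + 2) → ℝ :=
  Fin.snoc (fun i => (p i : ℝ)) (q : ℝ)

/-- `g` preserves the subspace `ℝ^{n+1} × {0}`. -/
def preservesHyperplane (n : ℕ) (g : Matrix (Fin (n + 2)) (Fin (n + 2)) ℝ) : Prop :=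
  ∀ x : Fin (n + 2) → ℝ, x (Fin.last (n + 1)) = 0 → g.mulVec x (Fin.last (n + 1)) = 0

/-- `ω(Λ)`: the infimum of the (sup) norms of the nonzero vectors of `Λ`. -/
noncomputable def omegaMin (n : ℕ) (Λ : Set (Fin (n + 2) → ℝ)) : ℝ :=
  sInf ((fun v => ‖v‖) '' {v | v ∈ Λ ∧ v ≠ 0})

/-- The lattice `g Λ₀`. -/
noncomputable def latticeOf (n : ℕ) (g : Matrix (Fin (n + 2)) (Fin (n + 2)) ℝ) :
    Set (Fin (n + 2) → ℝ) :=
  (fun v => g.mulVec v) '' Lambda0 n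

/-!
For `v = (p, q) ∈ Λ₀` with `q > 0` put `δ(v) = q - (r_α v)₀`. Since `r_α` fixes the last
coordinate and preserves `Q`, expanding `Q(r_α (v - q (α, 1))) = Q(r_α v - q e₁)` gives
`|p - qα|² = 2qδ(v)`, while the extreme coordinates of `g_t r_α v` are `q e^{-t} + δ sinh t`
and `q e^{-t} - δ cosh t`. Hence a vector of `g_t r_α Λ₀` shorter than `ρ(t) = e^{-t} x`, where
`φ(x) = 2 / (√(n+1) e^t)`, has `q < x` and `δ < 2 e^{-2t} x`; as `x φ(x)` is non-increasing this
gives `‖α - p/q‖ < √(n+1) φ(q)` whenever `q ≥ x₀`.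

If `α = p/q`, the multiples of `(p, q)` are approximants. Otherwise `δ > 0` on every such `v`, so
each `g_t r_α v` escapes to infinity while `ρ(t) ≤ √(n+1) x₀ φ(x₀) / 2` stays bounded; thus the
short vectors along `t_k` cannot all come from finitely many `(p, q)`.
-/

open Matrix Filter

noncomputable def tZero (n : ℕ) (φ : ℝ → ℝ) (x₀ : ℝ) : ℝ :=
  Real.log (2 / (Real.sqrt ((n : ℝ) + 1) * φ x₀))

noncomputable def rho (n : ℕ) (ψ : ℝ → ℝ) (t : ℝ) : ℝ :=
  Real.exp (-t) * ψ (2 / (Real.sqrt ((n : ℝ) + 1) * Real.exp t))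

def approximants (n : ℕ) (x₀ : ℝ) (φ : ℝ → ℝ) (α : Fin (n + 1) → ℝ) :
    Set ((Fin (n + 1) → ℤ) × ℕ) :=
  {pq | 0 < pq.2 ∧ x₀ ≤ (pq.2 : ℝ) ∧ ratPt n pq.1 pq.2 ∈ unitSphere n ∧
    ‖α - ratPt n pq.1 pq.2‖ < Real.sqrt ((n : ℝ) + 1) * φ (pq.2 : ℝ)}

section

variable {n : ℕ}

lemma zero_ne_last : (0 : Fin (n + 2)) ≠ Fin.last (n + 1) := by
  simp [Fin.ext_iff]

lemma gFlow_mulVec_zero (t : ℝ) (w : Fin (n + 2) → ℝ) :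
    (gFlow n t *ᵥ w) 0 = Real.cosh t * w 0 - Real.sinh t * w (Fin.last (n + 1)) := by
  simp only [Matrix.mulVec, dotProduct, gFlow, Matrix.of_apply]
  rw [Fintype.sum_eq_add 0 (Fin.last (n + 1)) zero_ne_last]
  · simp [sub_eq_add_neg]
  · rintro j ⟨hj0, hjl⟩
    simp [hj0, hjl, Ne.symm hj0]

lemma gFlow_mulVec_last (t : ℝ) (w : Fin (n + 2) → ℝ) :
    (gFlow n t *ᵥ w) (Fin.last (n + 1)) =
      -Real.sinh t * w 0 + Real.cosh t * w (Fin.last (n + 1)) := by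
  simp only [Matrix.mulVec, dotProduct, gFlow, Matrix.of_apply]
  rw [Fintype.sum_eq_add 0 (Fin.last (n + 1)) zero_ne_last]
  · simp [zero_ne_last.symm]
  · rintro j ⟨hj0, hjl⟩
    simp [hj0, hjl, zero_ne_last.symm, Ne.symm hjl]

lemma eOne_zero : eOne n 0 = 1 := by
  simp [eOne]

lemma eOne_castSucc_succ (j : Fin n) : eOne n j.succ.castSucc = 0 := by
  simp [eOne, Fin.ext_iff, j.isLt.ne]

lemma eOne_last : eOne n (Fin.last (n + 1)) = 1 := by
  simp [eOne, zero_ne_last.symm]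

lemma Qform_eOne : Qform n (eOne n) = 0 := by
  simp [Qform, Fin.sum_univ_succ (n := n), eOne]

lemma eOne_mem_Lambda0 : eOne n ∈ Lambda0 n := by
  refine ⟨fun i => ⟨if i = 0 ∨ i = Fin.last (n + 1) then 1 else 0, ?_⟩, Qform_eOne⟩
  by_cases h0 : i = 0 <;> by_cases hl : i = Fin.last (n + 1) <;> simp [eOne, h0, hl]

variable {α : Fin (n + 1) → ℝ} {rα : Matrix (Fin (n + 2)) (Fin (n + 2)) ℝ}

lemma mulVec_last_of_preservesHyperplane (hrP : preservesHyperplane n rα)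
    (hrα : rα *ᵥ embedS n α = eOne n) (v : Fin (n + 2) → ℝ) :
    (rα *ᵥ v) (Fin.last (n + 1)) = v (Fin.last (n + 1)) := by
  set c := v (Fin.last (n + 1))
  have hsplit : rα *ᵥ v = rα *ᵥ (v - c • embedS n α) + c • eOne n := by
    rw [mulVec_sub, mulVec_smul, hrα, sub_add_cancel]
  have hflat : (v - c • embedS n α) (Fin.last (n + 1)) = 0 := by
    simp [c, embedS]
  rw [hsplit, Pi.add_apply, hrP _ hflat, Pi.smul_apply, eOne_last, smul_eq_mul, mul_one,
    zero_add]

variable (rα) in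
def coneDefect (v : Fin (n + 2) → ℝ) : ℝ :=
  v (Fin.last (n + 1)) - (rα *ᵥ v) 0

lemma sum_sq_sub_eq_coneDefect (hrG : isSOQ n rα) (hrP : preservesHyperplane n rα)
    (hrα : rα *ᵥ embedS n α = eOne n) {v : Fin (n + 2) → ℝ} (hv : Qform n v = 0) :
    ∑ i, (v i.castSucc - v (Fin.last (n + 1)) * α i) ^ 2 =
      2 * v (Fin.last (n + 1)) * coneDefect rα v := by
  set c := v (Fin.last (n + 1))
  set w := rα *ᵥ v
  have hwl : w (Fin.last (n + 1)) = c := mulVec_last_of_preservesHyperplane hrP hrα v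
  have hQw : Qform n w = 0 := (hrG.2 v).trans hv
  have hmap : rα *ᵥ (v - c • embedS n α) = w - c • eOne n := by
    rw [mulVec_sub, mulVec_smul, hrα]
  have hQ := hrG.2 (v - c • embedS n α)
  rw [hmap] at hQ
  simp only [Qform, Fin.sum_univ_succ, Pi.sub_apply, Pi.smul_apply, smul_eq_mul, embedS,
    Fin.snoc_castSucc, Fin.snoc_last, Fin.castSucc_zero, eOne_zero, eOne_castSucc_succ,
    eOne_last, hwl, mul_zero, sub_zero, mul_one] at hQ hQw ⊢
  unfold coneDefect
  linear_combination hQw - hQ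

lemma abs_apply_le_norm {ι : Type*} [Fintype ι] (u : ι → ℝ) (i : ι) : |u i| ≤ ‖u‖ :=
  norm_le_pi_norm u i

lemma gFlow_mul_mulVec_last (hrP : preservesHyperplane n rα) (hrα : rα *ᵥ embedS n α = eOne n)
    (t : ℝ) (v : Fin (n + 2) → ℝ) :
    ((gFlow n t * rα) *ᵥ v) (Fin.last (n + 1)) =
      v (Fin.last (n + 1)) * Real.exp (-t) + Real.sinh t * coneDefect rα v := by
  rw [← mulVec_mulVec, gFlow_mulVec_last, mulVec_last_of_preservesHyperplane hrP hrα,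
    coneDefect, ← Real.cosh_sub_sinh]
  ring

lemma gFlow_mul_mulVec_zero (hrP : preservesHyperplane n rα) (hrα : rα *ᵥ embedS n α = eOne n)
    (t : ℝ) (v : Fin (n + 2) → ℝ) :
    ((gFlow n t * rα) *ᵥ v) 0 =
      v (Fin.last (n + 1)) * Real.exp (-t) - Real.cosh t * coneDefect rα v := by
  rw [← mulVec_mulVec, gFlow_mulVec_zero, mulVec_last_of_preservesHyperplane hrP hrα,
    coneDefect, ← Real.cosh_sub_sinh]
  ring

lemma coneDefect_nonneg (hrG : isSOQ n rα) (hrP : preservesHyperplane n rα)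
    (hrα : rα *ᵥ embedS n α = eOne n) {v : Fin (n + 2) → ℝ} (hv : Qform n v = 0)
    (hl : 0 < v (Fin.last (n + 1))) : 0 ≤ coneDefect rα v := by
  have h := sum_sq_sub_eq_coneDefect hrG hrP hrα hv
  have : 0 ≤ ∑ i, (v i.castSucc - v (Fin.last (n + 1)) * α i) ^ 2 := by positivity
  nlinarith

lemma coneDefect_pos (hrG : isSOQ n rα) (hrP : preservesHyperplane n rα)
    (hrα : rα *ᵥ embedS n α = eOne n) {v : Fin (n + 2) → ℝ} (hv : Qform n v = 0)
    (hl : 0 < v (Fin.last (n + 1))) {i : Fin (n + 1)}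
    (hi : v i.castSucc ≠ v (Fin.last (n + 1)) * α i) : 0 < coneDefect rα v := by
  have h := sum_sq_sub_eq_coneDefect hrG hrP hrα hv
  have : (v i.castSucc - v (Fin.last (n + 1)) * α i) ^ 2 ≤
      ∑ j, (v j.castSucc - v (Fin.last (n + 1)) * α j) ^ 2 :=
    Finset.single_le_sum (f := fun j => (v j.castSucc - v (Fin.last (n + 1)) * α j) ^ 2)
      (fun j _ => sq_nonneg _) (Finset.mem_univ i)
  have : 0 < (v i.castSucc - v (Fin.last (n + 1)) * α i) ^ 2 := by
    positivity [sub_ne_zero.2 hi]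
  nlinarith

lemma mul_exp_neg_le_gFlow_mul_mulVec_last (hrG : isSOQ n rα)
    (hrP : preservesHyperplane n rα) (hrα : rα *ᵥ embedS n α = eOne n) {v : Fin (n + 2) → ℝ}
    (hv : Qform n v = 0) (hl : 0 < v (Fin.last (n + 1))) {t : ℝ} (ht : 0 ≤ t) :
    v (Fin.last (n + 1)) * Real.exp (-t) ≤ ((gFlow n t * rα) *ᵥ v) (Fin.last (n + 1)) := by
  rw [gFlow_mul_mulVec_last hrP hrα]
  have := coneDefect_nonneg hrG hrP hrα hv hl
  have := Real.sinh_nonneg_iff.2 ht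
  nlinarith

lemma coneDefect_lt_of_norm_lt (hrG : isSOQ n rα) (hrP : preservesHyperplane n rα)
    (hrα : rα *ᵥ embedS n α = eOne n) {v : Fin (n + 2) → ℝ} (hv : Qform n v = 0)
    (hl : 0 < v (Fin.last (n + 1))) {t ρ : ℝ} (ht : 0 ≤ t)
    (h : ‖(gFlow n t * rα) *ᵥ v‖ < ρ) :
    v (Fin.last (n + 1)) * Real.exp (-t) < ρ ∧ Real.exp t * coneDefect rα v < 2 * ρ := by
  have hlast : |((gFlow n t * rα) *ᵥ v) (Fin.last (n + 1))| < ρ :=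
    (abs_apply_le_norm _ _).trans_lt h
  have hzero : |((gFlow n t * rα) *ᵥ v) 0| < ρ := (abs_apply_le_norm _ _).trans_lt h
  have hle := mul_exp_neg_le_gFlow_mul_mulVec_last hrG hrP hrα hv hl ht
  rw [gFlow_mul_mulVec_last hrP hrα] at hlast hle
  rw [gFlow_mul_mulVec_zero hrP hrα] at hzero
  rw [abs_lt] at hlast hzero
  refine ⟨by linarith, ?_⟩
  rw [← Real.cosh_add_sinh]
  linarith

lemma tendsto_norm_gFlow_mul_mulVec_atTop (hrP : preservesHyperplane n rα)
    (hrα : rα *ᵥ embedS n α = eOne n) {v : Fin (n + 2) → ℝ} (hl : 0 ≤ v (Fin.last (n + 1)))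
    (hD : 0 < coneDefect rα v) :
    Tendsto (fun t => ‖(gFlow n t * rα) *ᵥ v‖) atTop atTop := by
  refine tendsto_atTop_mono' atTop ?_ (tendsto_id.atTop_mul_const hD)
  filter_upwards [eventually_ge_atTop 0] with t ht
  calc id t * coneDefect rα v ≤ Real.sinh t * coneDefect rα v := by
        gcongr; exact Real.self_le_sinh_iff.2 ht
    _ ≤ ((gFlow n t * rα) *ᵥ v) (Fin.last (n + 1)) := by
        rw [gFlow_mul_mulVec_last hrP hrα]
        have := Real.exp_pos (-t)
        nlinarith
    _ ≤ ‖(gFlow n t * rα) *ᵥ v‖ := (le_abs_self _).trans (abs_apply_le_norm _ _)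

@[simp] lemma vecPQ_castSucc (p : Fin (n + 1) → ℤ) (q : ℕ) (i : Fin (n + 1)) :
    vecPQ n p q i.castSucc = p i := by
  simp [vecPQ]

@[simp] lemma vecPQ_last (p : Fin (n + 1) → ℤ) (q : ℕ) :
    vecPQ n p q (Fin.last (n + 1)) = q := by
  simp [vecPQ]

lemma vecPQ_mem_Lambda0_iff {p : Fin (n + 1) → ℤ} {q : ℕ} :
    vecPQ n p q ∈ Lambda0 n ↔ ∑ i, (p i : ℝ) ^ 2 = (q : ℝ) ^ 2 := by
  refine ⟨fun h => by simpa [Qform, sub_eq_zero] using h.2, fun h => ⟨fun i => ?_, ?_⟩⟩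
  · refine Fin.lastCases ⟨q, by simp⟩ (fun j => ⟨p j, by simp⟩) i
  · simpa [Qform, sub_eq_zero] using h

lemma ratPt_mem_unitSphere {p : Fin (n + 1) → ℤ} {q : ℕ} (hq : 0 < q)
    (h : vecPQ n p q ∈ Lambda0 n) : ratPt n p q ∈ unitSphere n := by
  have hq' : (q : ℝ) ^ 2 ≠ 0 := by positivity
  simp only [unitSphere, ratPt, Set.mem_ofPred_eq, div_pow, ← Finset.sum_div,
    vecPQ_mem_Lambda0_iff.1 h, div_self hq']

lemma neg_mem_Lambda0 {m : Fin (n + 2) → ℝ} (hm : m ∈ Lambda0 n) : -m ∈ Lambda0 n := by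
  refine ⟨fun i => ?_, by simpa [Qform] using hm.2⟩
  obtain ⟨k, hk⟩ := hm.1 i
  exact ⟨-k, by simp [hk]⟩

lemma last_ne_zero_of_mem_Lambda0 {m : Fin (n + 2) → ℝ} (hm : m ∈ Lambda0 n) (hm0 : m ≠ 0) :
    m (Fin.last (n + 1)) ≠ 0 := by
  intro hl
  have hsum : ∑ i : Fin (n + 1), m i.castSucc ^ 2 = 0 := by
    simpa [Qform, hl] using hm.2
  refine hm0 (funext fun i => Fin.lastCases hl (fun j => ?_) i)
  exact pow_eq_zero_iff two_ne_zero |>.1 <|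
    (Finset.sum_eq_zero_iff_of_nonneg fun _ _ => sq_nonneg _).1 hsum j (Finset.mem_univ j)

lemma exists_vecPQ_eq_of_mem_Lambda0 {m : Fin (n + 2) → ℝ} (hm : m ∈ Lambda0 n)
    (hpos : 0 < m (Fin.last (n + 1))) : ∃ p q, vecPQ n p q = m := by
  choose k hk using hm.1
  have hk0 : 0 ≤ k (Fin.last (n + 1)) := by
    have := hk (Fin.last (n + 1)) ▸ hpos
    exact_mod_cast this.le
  refine ⟨fun i => k i.castSucc, (k (Fin.last (n + 1))).toNat,
    funext fun i => Fin.lastCases ?_ (fun j => ?_) i⟩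
  · rw [vecPQ_last, hk, ← Int.cast_natCast, Int.toNat_of_nonneg hk0]
  · rw [vecPQ_castSucc, hk]

lemma exists_vecPQ_norm_lt_of_omegaMin_lt (hrG : isSOQ n rα)
    (hrP : preservesHyperplane n rα) (hrα : rα *ᵥ embedS n α = eOne n) {t ρ : ℝ}
    (ht : 0 ≤ t) (h : omegaMin n (latticeOf n (gFlow n t * rα)) < ρ) :
    ∃ p q, 0 < q ∧ vecPQ n p q ∈ Lambda0 n ∧ ‖(gFlow n t * rα) *ᵥ vecPQ n p q‖ < ρ := by
  have hne : ((gFlow n t * rα) *ᵥ eOne n) ≠ 0 := by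
    intro h0
    have := mul_exp_neg_le_gFlow_mul_mulVec_last hrG hrP hrα (v := eOne n) Qform_eOne
      (by simp [eOne_last]) ht
    rw [h0, eOne_last] at this
    simp only [one_mul, Pi.zero_apply] at this
    linarith [Real.exp_pos (-t)]
  have hnonempty : {u | u ∈ latticeOf n (gFlow n t * rα) ∧ u ≠ 0}.Nonempty :=
    ⟨_, ⟨eOne n, eOne_mem_Lambda0, rfl⟩, hne⟩
  obtain ⟨_, ⟨_, ⟨⟨m, hm, rfl⟩, hu0⟩, rfl⟩, hlt⟩ :=
    exists_lt_of_csInf_lt (hnonempty.image _) h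
  have hm0 : m ≠ 0 := by rintro rfl; exact hu0 (mulVec_zero _)
  have of_last_pos : ∀ m' ∈ Lambda0 n, 0 < m' (Fin.last (n + 1)) →
      ‖(gFlow n t * rα) *ᵥ m'‖ < ρ → ∃ p q, 0 < q ∧ vecPQ n p q ∈ Lambda0 n ∧
        ‖(gFlow n t * rα) *ᵥ vecPQ n p q‖ < ρ := by
    rintro m' hm' hpos hlt'
    obtain ⟨p, q, rfl⟩ := exists_vecPQ_eq_of_mem_Lambda0 hm' hpos
    exact ⟨p, q, by exact_mod_cast (vecPQ_last p q ▸ hpos), hm', hlt'⟩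
  rcases (last_ne_zero_of_mem_Lambda0 hm hm0).lt_or_gt with hneg | hpos
  · exact of_last_pos (-m) (neg_mem_Lambda0 hm) (by simpa using hneg)
      (by simpa [mulVec_neg] using hlt)
  · exact of_last_pos m hm hpos hlt

section Approximation

variable {x₀ : ℝ} {φ ψ : ℝ → ℝ}

lemma exists_rho_eq (hφ₀ : 0 < φ x₀)
    (hψmem : ∀ y ∈ Set.Ioc (0 : ℝ) (φ x₀), ψ y ∈ Set.Ici x₀ ∧ φ (ψ y) = y)
    {t : ℝ} (ht : tZero n φ x₀ ≤ t) :
    ∃ x, x₀ ≤ x ∧ rho n ψ t = Real.exp (-t) * x ∧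
      2 * Real.exp (-t) = Real.sqrt ((n : ℝ) + 1) * φ x := by
  have hs : 0 < Real.sqrt ((n : ℝ) + 1) := by positivity
  have hle : 2 / (Real.sqrt ((n : ℝ) + 1) * φ x₀) ≤ Real.exp t :=
    (Real.log_le_iff_le_exp (by positivity)).1 ht
  have hy : 2 / (Real.sqrt ((n : ℝ) + 1) * Real.exp t) ∈ Set.Ioc (0 : ℝ) (φ x₀) := by
    refine ⟨by positivity, ?_⟩
    rw [div_le_iff₀ (by positivity)] at hle ⊢
    nlinarith
  obtain ⟨hx, hφx⟩ := hψmem _ hy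
  refine ⟨_, hx, rfl, ?_⟩
  rw [hφx, Real.exp_neg]
  field_simp

lemma rho_le (hφ₀ : 0 < φ x₀) (hxφ : ∀ x y : ℝ, x₀ ≤ x → x ≤ y → y * φ y ≤ x * φ x)
    (hψmem : ∀ y ∈ Set.Ioc (0 : ℝ) (φ x₀), ψ y ∈ Set.Ici x₀ ∧ φ (ψ y) = y)
    {t : ℝ} (ht : tZero n φ x₀ ≤ t) :
    rho n ψ t ≤ Real.sqrt ((n : ℝ) + 1) / 2 * (x₀ * φ x₀) := by
  obtain ⟨x, hx, hρ, hexp⟩ := exists_rho_eq hφ₀ hψmem ht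
  calc rho n ψ t = Real.sqrt ((n : ℝ) + 1) / 2 * (x * φ x) := by
        rw [hρ]; linear_combination x / 2 * hexp
    _ ≤ Real.sqrt ((n : ℝ) + 1) / 2 * (x₀ * φ x₀) :=
        mul_le_mul_of_nonneg_left (hxφ x₀ x le_rfl hx) (by positivity)

lemma mul_sq_le_mul_sq (hxφ : ∀ x y : ℝ, x₀ ≤ x → x ≤ y → y * φ y ≤ x * φ x)
    {q x : ℝ} (hq : 0 < q) (hq₀ : x₀ ≤ q) (hqx : q ≤ x) (hφx : 0 ≤ φ x) :
    x * φ x ^ 2 ≤ q * φ q ^ 2 := by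
  have hmul := hxφ q x hq₀ hqx
  have hφ : φ x ≤ φ q := le_of_mul_le_mul_left (by nlinarith) hq
  calc x * φ x ^ 2 = x * φ x * φ x := by ring
    _ ≤ q * φ q * φ q := mul_le_mul hmul hφ hφx (by nlinarith)
    _ = q * φ q ^ 2 := by ring

lemma norm_sub_ratPt_lt {p : Fin (n + 1) → ℤ} {q : ℕ} {c : ℝ} (hq : 0 < q) (hc : 0 < c)
    (h : ∑ i, ((p i : ℝ) - q * α i) ^ 2 < (q * c) ^ 2) : ‖α - ratPt n p q‖ < c := by
  have hq' : (0 : ℝ) < q := by exact_mod_cast hq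
  refine (pi_norm_lt_iff hc).2 fun i => ?_
  have hi : ((p i : ℝ) - q * α i) ^ 2 < (q * c) ^ 2 :=
    (Finset.single_le_sum (f := fun j => ((p j : ℝ) - q * α j) ^ 2)
      (fun j _ => sq_nonneg _) (Finset.mem_univ i)).trans_lt h
  have habs := abs_lt_of_sq_lt_sq hi (by positivity)
  have hdiff : ratPt n p q i - α i = ((p i : ℝ) - q * α i) / q := by
    simp only [ratPt]
    field_simp
  rw [Real.norm_eq_abs, Pi.sub_apply, abs_sub_comm, hdiff, abs_div, abs_of_pos hq',
    div_lt_iff₀ hq', mul_comm c]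
  exact habs

lemma mem_approximants_of_norm_lt_rho (hrG : isSOQ n rα) (hrP : preservesHyperplane n rα)
    (hrα : rα *ᵥ embedS n α = eOne n) (hφpos : ∀ x ∈ Set.Ici x₀, 0 < φ x)
    (hxφ : ∀ x y : ℝ, x₀ ≤ x → x ≤ y → y * φ y ≤ x * φ x)
    (hψmem : ∀ y ∈ Set.Ioc (0 : ℝ) (φ x₀), ψ y ∈ Set.Ici x₀ ∧ φ (ψ y) = y)
    {t : ℝ} (ht₀ : 0 ≤ t) (ht : tZero n φ x₀ ≤ t) {p : Fin (n + 1) → ℤ} {q : ℕ}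
    (hq : 0 < q) (hqx : x₀ ≤ q) (hv : vecPQ n p q ∈ Lambda0 n)
    (h : ‖(gFlow n t * rα) *ᵥ vecPQ n p q‖ < rho n ψ t) : (p, q) ∈ approximants n x₀ φ α := by
  have hq' : (0 : ℝ) < q := by exact_mod_cast hq
  obtain ⟨x, hx, hρ, hexp⟩ := exists_rho_eq (hφpos x₀ Set.self_mem_Ici) hψmem ht
  have hlast : 0 < vecPQ n p q (Fin.last (n + 1)) := by simpa using hq'
  obtain ⟨hqx', hD⟩ := coneDefect_lt_of_norm_lt hrG hrP hrα hv.2 hlast ht₀ (hρ ▸ h)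
  have hsum := sum_sq_sub_eq_coneDefect hrG hrP hrα hv.2
  simp only [vecPQ_castSucc, vecPQ_last] at hqx' hsum
  have het := Real.exp_pos (-t)
  have hqltx : (q : ℝ) < x := by nlinarith
  have hs : Real.sqrt ((n : ℝ) + 1) ^ 2 = n + 1 := Real.sq_sqrt (by positivity)
  have hφx : 0 ≤ φ x := by nlinarith [Real.sqrt_nonneg ((n : ℝ) + 1)]
  have hφ := mul_sq_le_mul_sq hxφ hq' hqx hqltx.le hφx
  refine ⟨hq, hqx, ratPt_mem_unitSphere hq hv,
    norm_sub_ratPt_lt hq (mul_pos (by positivity) (hφpos q hqx)) ?_⟩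
  have hD' : coneDefect rα (vecPQ n p q) < 2 * Real.exp (-t) ^ 2 * x := by
    have hinv : Real.exp (-t) * Real.exp t = 1 := by
      rw [← Real.exp_add, neg_add_cancel, Real.exp_zero]
    calc coneDefect rα (vecPQ n p q)
        = Real.exp (-t) * (Real.exp t * coneDefect rα (vecPQ n p q)) := by
          rw [← mul_assoc, hinv, one_mul]
      _ < Real.exp (-t) * (2 * (Real.exp (-t) * x)) := mul_lt_mul_of_pos_left hD het
      _ = 2 * Real.exp (-t) ^ 2 * x := by ring
  rw [hsum]
  calc 2 * q * coneDefect rα (vecPQ n p q) < q * ((2 * Real.exp (-t)) ^ 2 * x) := by nlinarith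
    _ = (n + 1) * q * (x * φ x ^ 2) := by rw [hexp]; linear_combination q * x * φ x ^ 2 * hs
    _ ≤ (n + 1) * q * (q * φ q ^ 2) := by gcongr
    _ = (q * (Real.sqrt ((n : ℝ) + 1) * φ q)) ^ 2 := by linear_combination -(q ^ 2 * φ q ^ 2) * hs

end Approximation

lemma ratPt_mul_left {p : Fin (n + 1) → ℤ} {q c : ℕ} (hc : 0 < c) :
    ratPt n (fun i => (c : ℤ) * p i) (c * q) = ratPt n p q := by
  have hc' : (c : ℝ) ≠ 0 := by positivity
  funext i
  simp only [ratPt, Int.cast_mul, Int.cast_natCast, Nat.cast_mul, mul_div_mul_left _ _ hc']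

lemma approximants_infinite_of_ratPt_eq {x₀ : ℝ} {φ : ℝ → ℝ} (hα : α ∈ unitSphere n)
    (hφpos : ∀ x ∈ Set.Ici x₀, 0 < φ x) {p : Fin (n + 1) → ℤ} {q : ℕ} (hq : 0 < q)
    (h : ratPt n p q = α) : (approximants n x₀ φ α).Infinite := by
  refine Set.infinite_of_injective_forall_mem
    (f := fun k : ℕ => (fun i => ((k + ⌈x₀⌉₊ + 1 : ℕ) : ℤ) * p i, (k + ⌈x₀⌉₊ + 1) * q))
    (fun k l hkl => by simpa [hq.ne'] using congrArg Prod.snd hkl) fun k => ?_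
  have hx₀ : x₀ ≤ ((k + ⌈x₀⌉₊ + 1) * q : ℕ) := by
    calc x₀ ≤ ⌈x₀⌉₊ := Nat.le_ceil x₀
      _ ≤ ((k + ⌈x₀⌉₊ + 1) * q : ℕ) := by
        exact_mod_cast (Nat.le_add_left _ k).trans
          ((Nat.le_succ _).trans (Nat.le_mul_of_pos_right _ hq))
  refine ⟨by positivity, hx₀, ?_, ?_⟩ <;> rw [ratPt_mul_left (Nat.succ_pos _), h]
  · exact hα
  · simpa using mul_pos (by positivity : 0 < Real.sqrt ((n : ℝ) + 1)) (hφpos _ hx₀)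

lemma finite_setOf_vecPQ_mem_Lambda0_le (N : ℝ) :
    {pq : (Fin (n + 1) → ℤ) × ℕ | vecPQ n pq.1 pq.2 ∈ Lambda0 n ∧ (pq.2 : ℝ) ≤ N}.Finite := by
  refine ((Set.Finite.pi fun _ => Set.finite_Icc (-(⌈N⌉₊ : ℤ)) ⌈N⌉₊).prod
    (Set.finite_Iic ⌈N⌉₊)).subset ?_
  rintro ⟨p, q⟩ ⟨hv, hqN⟩
  have hq : q ≤ ⌈N⌉₊ := by exact_mod_cast hqN.trans (Nat.le_ceil N)
  refine ⟨Set.mem_univ_pi.2 fun i => ?_, hq⟩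
  have hsq : (p i : ℝ) ^ 2 ≤ (q : ℝ) ^ 2 :=
    vecPQ_mem_Lambda0_iff.1 hv ▸ Finset.single_le_sum (f := fun j => (p j : ℝ) ^ 2)
      (fun j _ => sq_nonneg _) (Finset.mem_univ i)
  have habs : |p i| ≤ (q : ℤ) := by
    exact_mod_cast abs_le_of_sq_le_sq' hsq (by positivity) |> abs_le.2
  exact abs_le.1 (habs.trans (by exact_mod_cast hq))

lemma coneDefect_vecPQ_pos (hrG : isSOQ n rα) (hrP : preservesHyperplane n rα)
    (hrα : rα *ᵥ embedS n α = eOne n) {p : Fin (n + 1) → ℤ} {q : ℕ} (hq : 0 < q)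
    (hv : vecPQ n p q ∈ Lambda0 n) (hne : ratPt n p q ≠ α) :
    0 < coneDefect rα (vecPQ n p q) := by
  obtain ⟨i, hi⟩ := Function.ne_iff.1 hne
  have hq' : (q : ℝ) ≠ 0 := by positivity
  refine coneDefect_pos hrG hrP hrα hv.2 (by simpa using hq) (i := i) ?_
  rw [vecPQ_castSucc, vecPQ_last]
  rintro hpi
  exact hi (by simp [ratPt, hpi, hq'])

end

theorem small_lattice_vectors_implies_approximable_general (n : ℕ)
    (x₀ : ℝ) (φ ψ : ℝ → ℝ)
    (hφpos : ∀ x ∈ Set.Ici x₀, 0 < φ x)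
    (hxφ : ∀ x y : ℝ, x₀ ≤ x → x ≤ y → y * φ y ≤ x * φ x)
    -- `ψ = φ⁻¹` is the inverse function of `φ`, defined on `(0, φ(x₀)]`
    (hψmem : ∀ y ∈ Set.Ioc (0 : ℝ) (φ x₀), ψ y ∈ Set.Ici x₀ ∧ φ (ψ y) = y)
    (α : Fin (n + 1) → ℝ) (hα : α ∈ unitSphere n)
    (rα : Matrix (Fin (n + 2)) (Fin (n + 2)) ℝ) (hrG : isSOQ n rα)
    (hrP : preservesHyperplane n rα) (hrα : rα.mulVec (embedS n α) = eOne n)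
    (ts : ℕ → ℝ)
    (hts : ∀ k, Real.log (2 / (Real.sqrt ((n : ℝ) + 1) * φ x₀)) ≤ ts k)
    (htslim : Filter.Tendsto ts Filter.atTop Filter.atTop)
    (hsmall : ∀ k, omegaMin n (latticeOf n (gFlow n (ts k) * rα)) <
      Real.exp (-(ts k)) * ψ (2 / (Real.sqrt ((n : ℝ) + 1) * Real.exp (ts k)))) :
    {pq : (Fin (n + 1) → ℤ) × ℕ | 0 < pq.2 ∧ x₀ ≤ (pq.2 : ℝ) ∧
      ratPt n pq.1 pq.2 ∈ unitSphere n ∧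
      ‖α - ratPt n pq.1 pq.2‖ < Real.sqrt ((n : ℝ) + 1) * φ (pq.2 : ℝ)}.Infinite := by
  change (approximants n x₀ φ α).Infinite
  by_cases hrat : ∃ p q, 0 < q ∧ ratPt n p q = α
  · obtain ⟨p, q, hq, h⟩ := hrat
    exact approximants_infinite_of_ratPt_eq hα hφpos hq h
  push Not at hrat
  intro hfin
  set B := {pq : (Fin (n + 1) → ℤ) × ℕ | 0 < pq.2 ∧ vecPQ n pq.1 pq.2 ∈ Lambda0 n ∧
    (x₀ ≤ pq.2 → pq ∈ approximants n x₀ φ α)}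
  have hBfin : B.Finite := (hfin.union (finite_setOf_vecPQ_mem_Lambda0_le x₀)).subset
    fun pq ⟨_, hv, h⟩ => (le_or_gt x₀ pq.2).imp h fun hlt => ⟨hv, hlt.le⟩
  have hescape : ∀ᶠ t in atTop, 0 ≤ t ∧ ∀ pq ∈ B,
      Real.sqrt ((n : ℝ) + 1) / 2 * (x₀ * φ x₀) ≤ ‖(gFlow n t * rα) *ᵥ vecPQ n pq.1 pq.2‖ :=
    (eventually_ge_atTop 0).and <| hBfin.eventually_all.2 fun pq ⟨hq, hv, _⟩ =>
      (tendsto_norm_gFlow_mul_mulVec_atTop hrP hrα (by simp)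
        (coneDefect_vecPQ_pos hrG hrP hrα hq hv (hrat _ _ hq))).eventually_ge_atTop _
  obtain ⟨k, hk₀, hkB⟩ := (htslim.eventually hescape).exists
  obtain ⟨p, q, hq, hv, hlt⟩ := exists_vecPQ_norm_lt_of_omegaMin_lt hrG hrP hrα hk₀ (hsmall k)
  have hpq : (p, q) ∈ B := ⟨hq, hv, fun hqx =>
    mem_approximants_of_norm_lt_rho hrG hrP hrα hφpos hxφ hψmem hk₀ (hts k) hq hqx hv hlt⟩
  exact (hkB _ hpq).not_gt (hlt.trans_le (rho_le (hφpos x₀ Set.self_mem_Ici) hxφ hψmem (hts k)))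

/-- The other direction of the correspondence (Theorem `dictionary`): if there is a
sequence `t_k → ∞` in `[t₀,∞)` with `ω(g_{t_k} r_α Λ₀) < ρ(t_k)`, where
`t₀ = ln(2/(√(n+1)φ(x₀)))` and `ρ(t) = e^{−t} φ⁻¹(2/(√(n+1)e^t))`, then `α` is
`√(n+1)·φ`-approximable in `Sⁿ` (with denominators `q ≥ x₀`). -/
theorem small_lattice_vectors_implies_approximable (n : ℕ) (hn : 1 ≤ n)
    (x₀ : ℝ) (hx₀ : 1 ≤ x₀) (φ ψ : ℝ → ℝ)
    (hφpos : ∀ x ∈ Set.Ici x₀, 0 < φ x)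
    (hφanti : StrictAntiOn φ (Set.Ici x₀))
    (hφcont : ContinuousOn φ (Set.Ici x₀))
    (hφlim : Filter.Tendsto φ Filter.atTop (nhds 0))
    (hxφ : ∀ x y : ℝ, x₀ ≤ x → x ≤ y → y * φ y ≤ x * φ x)
    -- `ψ = φ⁻¹` is the inverse function of `φ`, defined on `(0, φ(x₀)]`
    (hψmem : ∀ y ∈ Set.Ioc (0 : ℝ) (φ x₀), ψ y ∈ Set.Ici x₀ ∧ φ (ψ y) = y)
    (hψφ : ∀ x ∈ Set.Ici x₀, ψ (φ x) = x)
    (α : Fin (n + 1) → ℝ) (hα : α ∈ unitSphere n)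
    (rα : Matrix (Fin (n + 2)) (Fin (n + 2)) ℝ) (hrG : isSOQ n rα)
    (hrP : preservesHyperplane n rα) (hrα : rα.mulVec (embedS n α) = eOne n)
    (ts : ℕ → ℝ)
    (hts : ∀ k, Real.log (2 / (Real.sqrt ((n : ℝ) + 1) * φ x₀)) ≤ ts k)
    (htslim : Filter.Tendsto ts Filter.atTop Filter.atTop)
    (hsmall : ∀ k, omegaMin n (latticeOf n (gFlow n (ts k) * rα)) <
      Real.exp (-(ts k)) * ψ (2 / (Real.sqrt ((n : ℝ) + 1) * Real.exp (ts k)))) :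
    {pq : (Fin (n + 1) → ℤ) × ℕ | 0 < pq.2 ∧ x₀ ≤ (pq.2 : ℝ) ∧
      ratPt n pq.1 pq.2 ∈ unitSphere n ∧
      ‖α - ratPt n pq.1 pq.2‖ < Real.sqrt ((n : ℝ) + 1) * φ (pq.2 : ℝ)}.Infinite :=
  small_lattice_vectors_implies_approximable_general n x₀ φ ψ hφpos hxφ hψmem α hα rα hrG hrP hrα ts
    hts htslim hsmall
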